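/- With the hypotheses of the Enriquez–Etingof setup (m_ħ Φ-twisted associative with m_0 commutative), the antisymmetrized triple bracket satisfies the identity [a₁,[a₂,a₃]] + c.p. = (m_ħ ∘ (1⊗m_ħ) ∘ (1 − Φ_A))(Σ_{σ∈S₃} sgn(σ) a_{σ(1)} ⊗ a_{σ(2)} ⊗ a_{σ(3)}), where [a,b] = m_ħ(a⊗b − b⊗a). -/
import Mathlib


open TensorProduct

/-- suppose `m_ħ : A ⊗ A → A` satisfies the `Φ`-twisted associativity
`m_ħ ∘ (1 ⊗ m_ħ) ∘ Φ_A = m_ħ ∘ (m_ħ ⊗ 1)`.  Then, with `[a,b] := m_ħ(a⊗b − b⊗a)`,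
`[a₁,[a₂,a₃]] + c.p. = (m_ħ ∘ (1 ⊗ m_ħ) ∘ (1 − Φ_A))(Σ_{σ∈S₃} sgn σ · a_{σ(1)} ⊗
a_{σ(2)} ⊗ a_{σ(3)})`.  This is a purely algebraic identity, with no expansion in `ħ`. -/
theorem statement_16 {R : Type*} [CommRing R] {A : Type*} [AddCommGroup A] [Module R A]
    (mh : A ⊗[R] A →ₗ[R] A)
    (ΦA : Module.End R (A ⊗[R] (A ⊗[R] A)))
    (hassoc : mh ∘ₗ (TensorProduct.map LinearMap.id mh) ∘ₗ ΦA =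
        mh ∘ₗ (TensorProduct.map mh LinearMap.id) ∘ₗ
          (TensorProduct.assoc R A A A).symm.toLinearMap)
    (brk : A → A → A)
    (hbrk : ∀ a b, brk a b = mh (a ⊗ₜ[R] b - b ⊗ₜ[R] a)) :
    ∀ a₁ a₂ a₃ : A,
      brk a₁ (brk a₂ a₃) + brk a₂ (brk a₃ a₁) + brk a₃ (brk a₁ a₂) =
        (mh ∘ₗ (TensorProduct.map LinearMap.id mh))
          (((LinearMap.id - ΦA : Module.End R (A ⊗[R] (A ⊗[R] A))))
            (a₁ ⊗ₜ[R] (a₂ ⊗ₜ[R] a₃) - a₁ ⊗ₜ[R] (a₃ ⊗ₜ[R] a₂)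
              - a₂ ⊗ₜ[R] (a₁ ⊗ₜ[R] a₃) + a₂ ⊗ₜ[R] (a₃ ⊗ₜ[R] a₁)
              + a₃ ⊗ₜ[R] (a₁ ⊗ₜ[R] a₂) - a₃ ⊗ₜ[R] (a₂ ⊗ₜ[R] a₁))) := by
  intro a₁ a₂ a₃
  have key : ∀ a b c : A,
      mh ((TensorProduct.map LinearMap.id mh) (ΦA (a ⊗ₜ[R] (b ⊗ₜ[R] c)))) =
        mh ((mh (a ⊗ₜ[R] b)) ⊗ₜ[R] c) := by
    intro a b c
    have := congrArg (fun f : A ⊗[R] (A ⊗[R] A) →ₗ[R] A => f (a ⊗ₜ[R] (b ⊗ₜ[R] c))) hassoc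
    simpa using this
  simp only [hbrk, map_sub, map_add, LinearMap.sub_apply, LinearMap.id_apply,
    LinearMap.comp_apply, TensorProduct.tmul_sub, TensorProduct.sub_tmul, TensorProduct.map_tmul, key]
  abel
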